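/- arXiv:math/0010258 — 3 statements merged into one kernel-verified Lean document; each statement's English description precedes it below -/
import Mathlib

section
/- Let R be a ring and M a semisimple R-module which is multiplicity-free in the sense that any two simple submodules of M that are isomorphic as R-modules are equal. Then every submodule N of M has exactly one complement: there exists a unique submodule P of M with N ∩ P = 0 and N + P = M. -/
/-!
Let `P` and `P'` be complements of `N`. A simple submodule `S ≤ P` meets `N` trivially, so the
projection onto `P'` along `N` maps it isomorphically onto a simple submodule of `P'`;
multiplicity-freeness forces that image to be `S` itself. As `P` is the sum of its simple
submodules, `P ≤ P'`, and by symmetry `P = P'`.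
-/

namespace Submodule

variable {R M : Type*} [Ring R] [AddCommGroup M] [Module R M]

theorem exists_le_linearEquiv_of_disjoint_of_isCompl {N P S : Submodule R M}
    (hNP : IsCompl N P) (hSN : Disjoint S N) :
    ∃ T ≤ P, Nonempty (S ≃ₗ[R] T) := by
  let g : S →ₗ[R] M := P.subtype ∘ₗ projectionOnto P N hNP.symm ∘ₗ S.subtype
  have hg : Function.Injective g := by
    rw [← LinearMap.ker_eq_bot, LinearMap.ker_comp_of_ker_eq_bot _ P.ker_subtype,
      LinearMap.ker_comp, ker_projectionOnto, ← disjoint_iff_comap_eq_bot]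
    exact hSN
  refine ⟨LinearMap.range g, ?_, ⟨LinearEquiv.ofInjective g hg⟩⟩
  exact (LinearMap.range_comp_le_range _ _).trans P.range_subtype.le

end Submodule

namespace Module

def IsMultiplicityFree (R M : Type*) [Ring R] [AddCommGroup M] [Module R M] : Prop :=
  ∀ S T : Submodule R M, IsSimpleModule R S → IsSimpleModule R T →
    Nonempty (S ≃ₗ[R] T) → S = T

namespace IsMultiplicityFree

variable {R M : Type*} [Ring R] [AddCommGroup M] [Module R M] [IsSemisimpleModule R M]

theorem le_of_isCompl (hmf : IsMultiplicityFree R M) {N P P' : Submodule R M}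
    (hP : IsCompl N P) (hP' : IsCompl N P') : P ≤ P' := by
  rw [← IsSemisimpleModule.sSup_simples_le P]
  refine sSup_le fun S ⟨hS, hSP⟩ => ?_
  obtain ⟨T, hTP', ⟨e⟩⟩ :=
    Submodule.exists_le_linearEquiv_of_disjoint_of_isCompl hP' (hP.disjoint.mono_right hSP).symm
  have hT : IsSimpleModule R T := IsSimpleModule.congr e.symm
  exact hmf S T hS hT ⟨e⟩ ▸ hTP'

theorem existsUnique_isCompl (hmf : IsMultiplicityFree R M) (N : Submodule R M) :
    ∃! P : Submodule R M, IsCompl N P := by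
  obtain ⟨P, hP⟩ := ComplementedLattice.exists_isCompl N
  exact ⟨P, hP, fun Q hQ => (hmf.le_of_isCompl hQ hP).antisymm (hmf.le_of_isCompl hP hQ)⟩

end IsMultiplicityFree

end Module

/-- In a multiplicity-free semisimple module, every submodule has exactly one
complement. -/
theorem stmt_2 (R M : Type*) [Ring R] [AddCommGroup M] [Module R M]
    [IsSemisimpleModule R M]
    (hmf : ∀ N P : Submodule R M, IsSimpleModule R N → IsSimpleModule R P →
      Nonempty (N ≃ₗ[R] P) → N = P) :
    ∀ N : Submodule R M, ∃! P : Submodule R M, IsCompl N P :=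
  Module.IsMultiplicityFree.existsUnique_isCompl hmf
end

section
/- For every j, k ∈ ℕ, every φ ∈ R^j and ψ ∈ R^k, and every d ∈ ℕ with d < |j − k|, the homogeneous component π_d(φ ∘ ψ) vanishes; consequently φ ∘ ψ lies in R^{j+k} ⊕ R^{j+k−1} ⊕ ⋯ ⊕ R^{|j−k|}. -/
/-! Below degree `|j - k|` the product `φ ∘ ψ` is invisible to the Hermitian form: moving `φ`
across by the adjoint relation, `⟨φ ∘ ψ, b⟩ = ⟨ψ, b ∘ σ φ⟩` and, after conjugating and moving `b`
across as well, `= conj ⟨σ φ, ψ ∘ σ b⟩`. For `b ∈ R^d` one of the two products has filtration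
degree below the degree of the vector it is paired with, so by orthogonality of the grading the
pairing vanishes, and nondegeneracy on `R^d` kills `π_d (φ ∘ ψ)`. -/

/-- A graded complex vector space `R = ⊕_{d ∈ ℕ} R^d` (encoded by the projections
`π d` onto the graded pieces), equipped with: an associative unital ℂ-bilinear
product `mul` (the specialized star product `∘`) satisfying the filtration bound
`π d (φ ∘ ψ) = 0` for `φ ∈ R^j`, `ψ ∈ R^k`, `d > j + k`; a Hermitian form `B`
(linear in the first argument, conjugate-linear in the second) for which the
grading is orthogonal and which is nondegenerate on each graded piece; and a
conjugate-linear grading-preserving involution `σ` satisfying the adjoint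
relation `B (φ ∘ a) b = B a (b ∘ σ φ)`. -/
structure GradedStarAlgebra (R : Type*) [AddCommGroup R] [Module ℂ R] where
  π : ℕ → Module.End ℂ R
  π_idem : ∀ (d : ℕ) (v : R), π d (π d v) = π d v
  π_orth : ∀ d e : ℕ, d ≠ e → ∀ v : R, π d (π e v) = 0
  π_fin : ∀ v : R, (Function.support fun d => π d v).Finite
  π_sum : ∀ v : R, ∑ᶠ d : ℕ, π d v = v
  mul : R →ₗ[ℂ] R →ₗ[ℂ] R
  one : R
  mul_assoc' : ∀ a b c : R, mul (mul a b) c = mul a (mul b c)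
  one_mul' : ∀ a : R, mul one a = a
  mul_one' : ∀ a : R, mul a one = a
  B : R → R → ℂ
  B_add_left : ∀ a a' b : R, B (a + a') b = B a b + B a' b
  B_smul_left : ∀ (c : ℂ) (a b : R), B (c • a) b = c * B a b
  B_conj : ∀ a b : R, B b a = (starRingEnd ℂ) (B a b)
  B_orth : ∀ j k : ℕ, j ≠ k → ∀ a b : R, π j a = a → π k b = b → B a b = 0
  B_nondeg : ∀ (d : ℕ) (a : R), π d a = a →
    (∀ b : R, π d b = b → B a b = 0) → a = 0
  σ : R → R
  σ_add : ∀ a b : R, σ (a + b) = σ a + σ b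
  σ_smul : ∀ (c : ℂ) (a : R), σ (c • a) = (starRingEnd ℂ c) • σ a
  σ_invol : ∀ a : R, σ (σ a) = a
  σ_grade : ∀ (d : ℕ) (a : R), π d a = a → π d (σ a) = σ a
  filt : ∀ (j k : ℕ) (a b : R), π j a = a → π k b = b →
    ∀ d : ℕ, j + k < d → π d (mul a b) = 0
  adj : ∀ φ a b : R, B (mul φ a) b = B a (mul b (σ φ))

namespace GradedStarAlgebra

variable {R : Type*} [AddCommGroup R] [Module ℂ R] (S : GradedStarAlgebra R)

lemma B_zero_left (b : R) : S.B 0 b = 0 := by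
  have h : S.B 0 b = S.B 0 b + S.B 0 b := by rw [← S.B_add_left, add_zero]
  exact left_eq_add.mp h

lemma B_zero_right (a : R) : S.B a 0 = 0 := by
  rw [S.B_conj, B_zero_left, map_zero]

lemma eq_sum_proj_of_support_subset {v : R} {s : Finset ℕ} (hs : ∀ d ∉ s, S.π d v = 0) :
    v = ∑ d ∈ s, S.π d v := by
  conv_lhs => rw [← S.π_sum v]
  exact finsum_eq_sum_of_support_subset _ fun d hd => by_contra fun h => hd (hs d h)

lemma B_proj_left {d : ℕ} (m : R) {b : R} (hb : S.π d b = b) :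
    S.B m b = S.B (S.π d m) b := by
  set s := (S.π_fin m).toFinset
  have hm : m = ∑ e ∈ s, S.π e m :=
    S.eq_sum_proj_of_support_subset fun e he => by simpa [s] using he
  let Bb : R →+ ℂ := AddMonoidHom.mk' (fun a => S.B a b) fun a a' => S.B_add_left a a' b
  calc S.B m b = ∑ e ∈ s, S.B (S.π e m) b := by
        conv_lhs => rw [hm]
        exact map_sum Bb _ s
    _ = S.B (S.π d m) b := by
        refine Finset.sum_eq_single d (fun e _ he => S.B_orth e d he _ b (S.π_idem e m) hb)
          fun hd => ?_
        rw [show S.π d m = 0 by simpa [s] using hd, S.B_zero_left]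

lemma B_proj_right {d : ℕ} {a : R} (ha : S.π d a = a) (m : R) :
    S.B a m = S.B a (S.π d m) := by
  rw [S.B_conj m a, S.B_conj (S.π d m) a, S.B_proj_left m ha]

lemma B_mul_eq_zero_of_add_lt {n p q : ℕ} {x a c : R} (hx : S.π n x = x) (ha : S.π p a = a)
    (hc : S.π q c = c) (h : p + q < n) : S.B x (S.mul a c) = 0 := by
  rw [S.B_proj_right hx, S.filt p q a c ha hc n h, S.B_zero_right]

lemma proj_mul_eq_zero_of_lt_abs_sub {j k d : ℕ} {φ ψ : R} (hφ : S.π j φ = φ)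
    (hψ : S.π k ψ = ψ) (hd : (d : ℤ) < |(j : ℤ) - (k : ℤ)|) : S.π d (S.mul φ ψ) = 0 := by
  have hσφ : S.π j (S.σ φ) = S.σ φ := S.σ_grade j φ hφ
  refine S.B_nondeg d _ (S.π_idem d _) fun b hb => ?_
  rw [← S.B_proj_left _ hb, S.adj]
  rcases lt_abs.mp hd with hd | hd
  · rw [S.B_conj, S.adj, S.B_mul_eq_zero_of_add_lt hσφ hψ (S.σ_grade d b hb) (by omega),
      map_zero]
  · exact S.B_mul_eq_zero_of_add_lt hψ hb hσφ (by omega)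

end GradedStarAlgebra

/-- For `φ ∈ R^j` and `ψ ∈ R^k`, every homogeneous component of `φ ∘ ψ` of degree
`d < |j - k|` vanishes; consequently `φ ∘ ψ` lies in `R^{j+k} ⊕ ⋯ ⊕ R^{|j-k|}`. -/
theorem stmt_3 (R : Type*) [AddCommGroup R] [Module ℂ R] (S : GradedStarAlgebra R)
    (j k : ℕ) (φ ψ : R) (hφ : S.π j φ = φ) (hψ : S.π k ψ = ψ) :
    (∀ d : ℕ, (d : ℤ) < |(j : ℤ) - (k : ℤ)| → S.π d (S.mul φ ψ) = 0) ∧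
    S.mul φ ψ = ∑ d ∈ Finset.Icc (max j k - min j k) (j + k), S.π d (S.mul φ ψ) := by
  have hlow : ∀ d : ℕ, (d : ℤ) < |(j : ℤ) - (k : ℤ)| → S.π d (S.mul φ ψ) = 0 :=
    fun d => S.proj_mul_eq_zero_of_lt_abs_sub hφ hψ
  refine ⟨hlow, S.eq_sum_proj_of_support_subset fun d hd => ?_⟩
  rcases not_and_or.mp (Finset.mem_Icc.not.mp hd) with hd | hd
  · exact hlow d (lt_abs.mpr (by omega))
  · exact S.filt j k φ ψ hφ hψ d (not_le.mp hd)
end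

section
/- Let V be a complex vector space, (F_d)_{d∈ℕ} an increasing sequence of subspaces of V, and λ : V × V → ℂ a symmetric ℂ-bilinear form. Suppose (V_d)_{d∈ℕ} and (W_d)_{d∈ℕ} are two families of subspaces, each splitting the filtration in the sense that the internal direct sum V_0 ⊕ V_1 ⊕ ⋯ ⊕ V_d equals F_d for every d, and likewise W_0 ⊕ ⋯ ⊕ W_d = F_d. Assume λ(V_j, V_k) = 0 and λ(W_j, W_k) = 0 whenever j ≠ k, and that the restriction of λ to each V_d is nondegenerate. Then W_d = V_d for every d. -/
/-!
Write `F_d = V_0 ⊔ ⋯ ⊔ V_d`. Orthogonality makes `λ` nondegenerate on every `F_d`, and `V_{d+1}`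
and `W_{d+1}` are both orthogonal to `F_d`. An element `w ∈ W_{d+1} ≤ F_d ⊔ V_{d+1}` splits as
`y + z` with `y ∈ F_d`, `z ∈ V_{d+1}`; then `y` is orthogonal to `F_d`, so `y = 0` and
`W_{d+1} ≤ V_{d+1}`. Conversely, writing `v ∈ V_{d+1}` as `y + z` with `y ∈ F_d`, `z ∈ W_{d+1}`
puts `y = v - z` in `F_d ∩ V_{d+1}`, which is orthogonal to `V_{d+1}`, so again `y = 0`.
-/

namespace LinearMap

variable {R M N : Type*} [CommRing R] [AddCommGroup M] [Module R M] [AddCommGroup N] [Module R N]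
  (l : M →ₗ[R] M →ₗ[R] N)

def SeparatingLeftOn (P : Submodule R M) : Prop :=
  ∀ a ∈ P, (∀ b ∈ P, l a b = 0) → a = 0

variable {l}

theorem SeparatingLeftOn.sup {A B : Submodule R M} (hA : l.SeparatingLeftOn A)
    (hB : l.SeparatingLeftOn B) (hAB : ∀ a ∈ A, ∀ b ∈ B, l a b = 0)
    (hBA : ∀ b ∈ B, ∀ a ∈ A, l b a = 0) : l.SeparatingLeftOn (A ⊔ B) := by
  intro x hx hxorth
  obtain ⟨a, ha, b, hb, rfl⟩ := Submodule.mem_sup.mp hx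
  have ha0 : a = 0 := hA a ha fun a' ha' => by
    simpa [hBA b hb a' ha'] using hxorth a' (Submodule.mem_sup_left ha')
  have hb0 : b = 0 := hB b hb fun b' hb' => by
    simpa [hAB a ha b' hb'] using hxorth b' (Submodule.mem_sup_right hb')
  simp [ha0, hb0]

theorem le_of_le_sup_of_orthogonal {P A B : Submodule R M} (hP : l.SeparatingLeftOn P)
    (hA : ∀ a ∈ A, ∀ p ∈ P, l a p = 0) (hB : ∀ b ∈ B, ∀ p ∈ P, l b p = 0) (hBPA : B ≤ P ⊔ A) :
    B ≤ A := by
  intro b hb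
  obtain ⟨p, hp, a, ha, rfl⟩ := Submodule.mem_sup.mp (hBPA hb)
  have hp0 : p = 0 := hP p hp fun u hu => by
    simpa [hA a ha u hu] using hB _ hb u hu
  simpa [hp0] using ha

theorem le_of_le_sup_of_separatingLeftOn {P A B : Submodule R M} (hA : l.SeparatingLeftOn A)
    (hPA : ∀ p ∈ P, ∀ a ∈ A, l p a = 0) (hBA : B ≤ A) (hAPB : A ≤ P ⊔ B) : A ≤ B := by
  intro a ha
  obtain ⟨p, hp, b, hb, rfl⟩ := Submodule.mem_sup.mp (hAPB ha)
  have hpA : p ∈ A := by simpa using A.sub_mem ha (hBA hb)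
  have hp0 : p = 0 := hA p hpA fun a' ha' => hPA p hp a' ha'
  simpa [hp0] using hb

section Filtration

variable {V W : ℕ → Submodule R M}

theorem orthogonal_partialSups (hV : ∀ j k, j ≠ k → ∀ a ∈ V j, ∀ b ∈ V k, l a b = 0)
    {d j : ℕ} (hdj : d < j) {a : M} (ha : a ∈ V j) {f : M} (hf : f ∈ partialSups V d) :
    l a f = 0 ∧ l f a = 0 := by
  have hle : partialSups V d ≤ ker (l a) ⊓ ker (l.flip a) :=
    partialSups_le V d _ fun i hi => le_inf
      (fun b hb => hV j i (by omega) a ha b hb) (fun b hb => hV i j (by omega) b hb a ha)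
  exact hle hf

theorem partialSups_add_one (V : ℕ → Submodule R M) (d : ℕ) :
    partialSups V (d + 1) = partialSups V d ⊔ V (d + 1) :=
  partialSups_succ V d

theorem separatingLeftOn_partialSups (hV : ∀ j k, j ≠ k → ∀ a ∈ V j, ∀ b ∈ V k, l a b = 0)
    (hsep : ∀ d, l.SeparatingLeftOn (V d)) (d : ℕ) : l.SeparatingLeftOn (partialSups V d) := by
  induction d with
  | zero => simpa using hsep 0
  | succ d ih =>
    rw [partialSups_add_one]
    exact ih.sup (hsep (d + 1))
      (fun f hf a ha => (orthogonal_partialSups hV d.lt_add_one ha hf).2)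
      (fun a ha f hf => (orthogonal_partialSups hV d.lt_add_one ha hf).1)

theorem eq_of_partialSups_eq_of_orthogonal (hVW : partialSups V = partialSups W)
    (hV : ∀ j k, j ≠ k → ∀ a ∈ V j, ∀ b ∈ V k, l a b = 0)
    (hW : ∀ j k, j ≠ k → ∀ a ∈ W j, ∀ b ∈ W k, l a b = 0)
    (hsep : ∀ d, l.SeparatingLeftOn (V d)) : W = V := by
  have hVW' (i : ℕ) : partialSups V i = partialSups W i := by rw [hVW]
  funext d
  cases d with
  | zero => simpa using (hVW' 0).symm
  | succ d =>
    have hWV : W (d + 1) ≤ V (d + 1) := by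
      refine le_of_le_sup_of_orthogonal (separatingLeftOn_partialSups hV hsep d)
        (fun a ha f hf => (orthogonal_partialSups hV d.lt_add_one ha hf).1)
        (fun b hb f hf => (orthogonal_partialSups hW d.lt_add_one hb (hVW' d ▸ hf)).1) ?_
      rw [← partialSups_add_one, hVW']
      exact le_partialSups W (d + 1)
    refine le_antisymm hWV (le_of_le_sup_of_separatingLeftOn (hsep (d + 1))
      (fun f hf a ha => (orthogonal_partialSups hV d.lt_add_one ha hf).2) hWV ?_)
    rw [hVW', ← partialSups_add_one, ← hVW']
    exact le_partialSups V (d + 1)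

end Filtration

end LinearMap

theorem stmt_5_general (V : Type*) [AddCommGroup V] [Module ℂ V]
    (F : ℕ → Submodule ℂ V)
    (l : V →ₗ[ℂ] V →ₗ[ℂ] ℂ)
    (Vd Wd : ℕ → Submodule ℂ V)
    (hVsum : ∀ d : ℕ, (⨆ i ∈ Finset.range (d + 1), Vd i) = F d)
    (hWsum : ∀ d : ℕ, (⨆ i ∈ Finset.range (d + 1), Wd i) = F d)
    (hVorth : ∀ j k : ℕ, j ≠ k → ∀ a ∈ Vd j, ∀ b ∈ Vd k, l a b = 0)
    (hWorth : ∀ j k : ℕ, j ≠ k → ∀ a ∈ Wd j, ∀ b ∈ Wd k, l a b = 0)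
    (hnondeg : ∀ d : ℕ, ∀ a ∈ Vd d, (∀ b ∈ Vd d, l a b = 0) → a = 0) :
    ∀ d : ℕ, Wd d = Vd d := by
  have hpartial : partialSups Vd = partialSups Wd := by
    refine DFunLike.ext _ _ fun d => ?_
    simp only [partialSups_eq_sup_range, Finset.sup_eq_iSup, hVsum, hWsum]
  exact congrFun (LinearMap.eq_of_partialSups_eq_of_orthogonal hpartial hVorth hWorth hnondeg)

/-- Uniqueness of orthogonal splittings: if `(V_d)` and `(W_d)` both split an
increasing filtration `(F_d)` of a complex vector space (`V_0 ⊕ ⋯ ⊕ V_d = F_d`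
for every `d`), both families are orthogonal for a symmetric bilinear form `λ`,
and `λ` is nondegenerate on each `V_d`, then `W_d = V_d` for every `d`. -/
theorem stmt_5 (V : Type*) [AddCommGroup V] [Module ℂ V]
    (F : ℕ → Submodule ℂ V) (hF : Monotone F)
    (l : V →ₗ[ℂ] V →ₗ[ℂ] ℂ) (hsymm : ∀ a b : V, l a b = l b a)
    (Vd Wd : ℕ → Submodule ℂ V)
    (hVind : iSupIndep Vd)
    (hVsum : ∀ d : ℕ, (⨆ i ∈ Finset.range (d + 1), Vd i) = F d)
    (hWind : iSupIndep Wd)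
    (hWsum : ∀ d : ℕ, (⨆ i ∈ Finset.range (d + 1), Wd i) = F d)
    (hVorth : ∀ j k : ℕ, j ≠ k → ∀ a ∈ Vd j, ∀ b ∈ Vd k, l a b = 0)
    (hWorth : ∀ j k : ℕ, j ≠ k → ∀ a ∈ Wd j, ∀ b ∈ Wd k, l a b = 0)
    (hnondeg : ∀ d : ℕ, ∀ a ∈ Vd d, (∀ b ∈ Vd d, l a b = 0) → a = 0) :
    ∀ d : ℕ, Wd d = Vd d :=
  stmt_5_general V F l Vd Wd hVsum hWsum hVorth hWorth hnondeg
end
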